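/- arXiv:math/0602326 — 3 statements merged into one kernel-verified Lean document; each statement's English description precedes it below -/
import Mathlib

section
/- Let σ² > 0, θ_1 ≥ 0, β > 0, 0 < C_1 ≤ C_2, and let c : ℕ → ℝ be a nonincreasing nonnegative sequence satisfying C_1 k^{−θ_1} e^{−βk} ≤ c_k ≤ C_2 k^{θ_1} e^{−βk} for all k ≥ 1 (this is the exponential-decay condition (3.3) with c_k playing the role of ‖a − a(k)‖_R²). Let K_n be a sequence of positive integers satisfying C_l ≤ K_n^{2+δ_1}/n ≤ C_u for some positive δ_1, C_l, C_u (condition (K.4)), set N = n − K_n, L_n(k) = (k/N)σ² + c_k for 1 ≤ k ≤ K_n, and let k_n* be a minimizer of L_n over {1,…,K_n}. Then there exists C > 0 such that for all sufficiently large n, |k_n* − (1/β) log N| ≤ C log log N; that is, k_n* = (1/β) log N + O(log log N). -/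
open Filter

set_option maxHeartbeats 2000000 in
/-- exponential-decay case — location of the minimizer `k_n*` of
`L_n(k) = (k/N)σ² + c_k`, where `c_k` plays the role of `‖a − a(k)‖_R²` and satisfies
the exponential-decay condition (3.3), and `K_n` satisfies (K.4):
`k_n* = (1/β) log N + O(log log N)`. -/
theorem stmt_14
    (σ2 θ1 β C1 C2 : ℝ) (hσ2 : 0 < σ2) (hθ1 : 0 ≤ θ1) (hβ : 0 < β)
    (hC1 : 0 < C1) (hC12 : C1 ≤ C2)
    (c : ℕ → ℝ) (hmono : Antitone c) (hnonneg : ∀ k, 0 ≤ c k)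
    (hdecay : ∀ k : ℕ, 1 ≤ k →
      C1 * (k : ℝ) ^ (-θ1) * Real.exp (-β * (k : ℝ)) ≤ c k ∧
      c k ≤ C2 * (k : ℝ) ^ θ1 * Real.exp (-β * (k : ℝ)))
    (K : ℕ → ℕ) (δ1 Cl Cu : ℝ) (hδ1 : 0 < δ1) (hCl : 0 < Cl) (hCu : 0 < Cu)
    (hK4 : ∀ n : ℕ, 1 ≤ n →
      Cl ≤ (K n : ℝ) ^ ((2 : ℝ) + δ1) / (n : ℝ) ∧ (K n : ℝ) ^ ((2 : ℝ) + δ1) / (n : ℝ) ≤ Cu)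
    (L : ℕ → ℕ → ℝ)
    (hL : ∀ n k, L n k = (k : ℝ) / ((n : ℝ) - (K n : ℝ)) * σ2 + c k)
    (kstar : ℕ → ℕ)
    (hkstar : ∀ n, kstar n ∈ Finset.Icc 1 (K n) ∧
      ∀ k ∈ Finset.Icc 1 (K n), L n (kstar n) ≤ L n k) :
    ∃ C : ℝ, 0 < C ∧ ∃ n0 : ℕ, ∀ n ≥ n0,
      |(kstar n : ℝ) - (1 / β) * Real.log ((n : ℝ) - (K n : ℝ))| ≤
        C * Real.log (Real.log ((n : ℝ) - (K n : ℝ))) := by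
  have h2δ : (0:ℝ) < 2 + δ1 := by linarith
  obtain ⟨α, hα_def⟩ : ∃ a : ℝ, a = 1/(2+δ1) := ⟨_, rfl⟩
  have hα : 0 < α := by rw [hα_def]; positivity
  have hα1 : α < 1 := by rw [hα_def, div_lt_one h2δ]; linarith
  have hαmul : ((2:ℝ)+δ1) * α = 1 := by rw [hα_def]; field_simp
  have hC2 : 0 < C2 := lt_of_lt_of_le hC1 hC12
  obtain ⟨D, hD_def⟩ : ∃ d : ℝ, d = (θ1+2)/β + 1 := ⟨_, rfl⟩
  have hD : 0 < D := by rw [hD_def]; positivity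
  obtain ⟨E, hE_def⟩ : ∃ e : ℝ, e = C2 * D ^ θ1 := ⟨_, rfl⟩
  have hE : 0 < E := by rw [hE_def]; positivity
  obtain ⟨F, hF_def⟩ : ∃ f : ℝ, f = D*σ2 + E := ⟨_, rfl⟩
  have hF : 0 < F := by rw [hF_def]; positivity
  obtain ⟨C, hC_def⟩ : ∃ cc : ℝ, cc = (θ1+1)/β + 1 + E/σ2 + (θ1+2)/β := ⟨_, rfl⟩
  have hCpos : 0 < C := by rw [hC_def]; positivity
  obtain ⟨T, hT_def⟩ : ∃ t : ℝ, t = max (Real.exp 1) (F/(C1 * β ^ θ1) + 1) := ⟨_, rfl⟩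
  refine ⟨C, hCpos, ?_⟩
  have htn : Tendsto (fun n:ℕ => (n:ℝ)) atTop atTop := tendsto_natCast_atTop_atTop
  have E1 : ∀ᶠ n:ℕ in atTop, 1 ≤ n := eventually_ge_atTop 1
  have E2 : ∀ᶠ n:ℕ in atTop, 2*Cu^α ≤ (n:ℝ)^((1:ℝ)-α) :=
    ((tendsto_rpow_atTop (by linarith)).comp htn).eventually_ge_atTop _
  have E3 : ∀ᶠ n:ℕ in atTop, T ≤ Real.log ((n:ℝ)/2) :=
    (Real.tendsto_log_atTop.comp (htn.atTop_div_const two_pos)).eventually_ge_atTop _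
  have E4 : ∀ᶠ n:ℕ in atTop, 2*D/(α * Cl^α) ≤ (n:ℝ)^(α/2) :=
    ((tendsto_rpow_atTop (by positivity)).comp htn).eventually_ge_atTop _
  have Emain : ∀ᶠ n:ℕ in atTop,
      |(kstar n : ℝ) - (1 / β) * Real.log ((n : ℝ) - (K n : ℝ))| ≤
        C * Real.log (Real.log ((n : ℝ) - (K n : ℝ))) := by
    filter_upwards [E1, E2, E3, E4] with n hn1 hn2 hn3 hn4
    have hnR : (1:ℝ) ≤ (n:ℝ) := by exact_mod_cast hn1
    have hnpos : (0:ℝ) < n := by linarith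
    obtain ⟨hK4l, hK4u⟩ := hK4 n hn1
    have hKn0 : (0:ℝ) ≤ (K n : ℝ) := Nat.cast_nonneg _
    -- Upper bound on K n : K n ≤ (Cu n)^α ≤ n/2
    have hKpow_ub : (K n : ℝ) ^ ((2:ℝ)+δ1) ≤ Cu * n := by
      rw [div_le_iff₀ hnpos] at hK4u; linarith
    have hKub : (K n : ℝ) ≤ Cu^α * (n:ℝ)^α := by
      have h1 : ((K n : ℝ) ^ ((2:ℝ)+δ1)) ^ α ≤ (Cu * n) ^ α :=
        Real.rpow_le_rpow (Real.rpow_nonneg hKn0 _) hKpow_ub hα.le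
      rwa [← Real.rpow_mul hKn0, hαmul, Real.rpow_one,
        Real.mul_rpow hCu.le hnpos.le] at h1
    have hhalf : (K n : ℝ) ≤ (n:ℝ)/2 := by
      have h2 : Cu^α * (n:ℝ)^α ≤ (n:ℝ)/2 := by
        rw [le_div_iff₀ (by norm_num : (0:ℝ) < 2)]
        calc Cu^α * (n:ℝ)^α * 2 = (2*Cu^α) * (n:ℝ)^α := by ring
          _ ≤ (n:ℝ)^((1:ℝ)-α) * (n:ℝ)^α :=
              mul_le_mul_of_nonneg_right hn2 (Real.rpow_nonneg hnpos.le _)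
          _ = (n:ℝ) := by rw [← Real.rpow_add hnpos]; norm_num
      linarith
    set Nr : ℝ := (n:ℝ) - (K n : ℝ) with hNr_def
    clear_value Nr
    have hNhalf : (n:ℝ)/2 ≤ Nr := by rw [hNr_def]; linarith
    have hNn : Nr ≤ (n:ℝ) := by rw [hNr_def]; linarith
    have hN : 0 < Nr := by linarith
    set x : ℝ := Real.log Nr with hx_def
    clear_value x
    set y : ℝ := Real.log x with hy_def
    clear_value y
    have hxT : T ≤ x := by
      rw [hx_def]; exact le_trans hn3 (Real.log_le_log (by linarith) hNhalf)
    have hex : Real.exp 1 ≤ x := le_trans (by rw [hT_def]; exact le_max_left _ _) hxT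
    have hx1 : (1:ℝ) ≤ x := le_trans (by
      have := Real.add_one_le_exp (1:ℝ); linarith) hex
    have hxpos : 0 < x := by linarith
    have hy1 : (1:ℝ) ≤ y := by
      have h := Real.log_le_log (Real.exp_pos 1) hex
      rw [Real.log_exp] at h; rw [hy_def]; exact h
    have hy0 : (0:ℝ) ≤ y := by linarith
    have hyx : y ≤ x := by
      rw [hy_def]
      exact le_trans (Real.log_le_sub_one_of_pos hxpos) (by linarith)
    have hxF : F/(C1 * β ^ θ1) + 1 ≤ x :=
      le_trans (by rw [hT_def]; exact le_max_right _ _) hxT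
    -- the benchmark order m
    obtain ⟨a, ha_def⟩ : ∃ aa : ℝ, aa = (x + (θ1+1)*y)/β := ⟨_, rfl⟩
    have hapos : 0 < a := by
      rw [ha_def]
      apply div_pos _ hβ
      have : 0 ≤ (θ1+1)*y := mul_nonneg (by linarith) hy0
      linarith
    obtain ⟨m, hm_def⟩ : ∃ mm : ℕ, mm = ⌈a⌉₊ := ⟨_, rfl⟩
    have hm1 : 1 ≤ m := by rw [hm_def]; exact Nat.one_le_ceil_iff.mpr hapos
    have hma : a ≤ (m:ℝ) := by rw [hm_def]; exact Nat.le_ceil a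
    have hmup : (m:ℝ) ≤ a + 1 := by rw [hm_def]; exact (Nat.ceil_lt_add_one hapos.le).le
    have haDx : a ≤ ((θ1+2)/β) * x := by
      rw [ha_def, div_le_iff₀ hβ]
      have h1 : (θ1+1)*y ≤ (θ1+1)*x := mul_le_mul_of_nonneg_left hyx (by linarith)
      have h2 : (θ1+2)/β * x * β = (θ1+2)*x := by field_simp
      linarith
    have hmD : (m:ℝ) ≤ D * x := by
      rw [hD_def]
      have : ((θ1+2)/β + 1) * x = ((θ1+2)/β) * x + x := by ring
      linarith
    -- m ≤ K n
    have hKlb : Cl^α * (n:ℝ)^α ≤ (K n : ℝ) := by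
      have hlow : Cl * n ≤ (K n : ℝ) ^ ((2:ℝ)+δ1) := by
        rw [le_div_iff₀ hnpos] at hK4l; linarith
      have h1 : (Cl * n) ^ α ≤ ((K n : ℝ) ^ ((2:ℝ)+δ1)) ^ α :=
        Real.rpow_le_rpow (by positivity) hlow hα.le
      rwa [← Real.rpow_mul hKn0, hαmul, Real.rpow_one,
        Real.mul_rpow hCl.le hnpos.le] at h1
    have hDxK : D * x ≤ (K n : ℝ) := by
      have hlogn : x ≤ Real.log n := by
        rw [hx_def]; exact Real.log_le_log hN hNn
      have hnα2 : (0:ℝ) < (n:ℝ)^(α/2) := Real.rpow_pos_of_pos hnpos _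
      have hlog2 : Real.log n ≤ (2/α) * (n:ℝ)^(α/2) := by
        have h1 : Real.log ((n:ℝ)^(α/2)) = (α/2) * Real.log n := Real.log_rpow hnpos _
        have h2 : Real.log ((n:ℝ)^(α/2)) ≤ (n:ℝ)^(α/2) :=
          le_trans (Real.log_le_sub_one_of_pos hnα2) (by linarith)
        rw [h1] at h2
        rw [div_mul_eq_mul_div, le_div_iff₀ hα]
        linarith only [h2]
      have hstep : (2*D/α) * (n:ℝ)^(α/2) ≤ Cl^α * (n:ℝ)^α := by
        have hClα : (0:ℝ) < Cl^α := Real.rpow_pos_of_pos hCl _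
        have h1 : (2*D/α) ≤ Cl^α * (n:ℝ)^(α/2) := by
          rw [div_le_iff₀ (by positivity : (0:ℝ) < α * Cl^α)] at hn4
          rw [div_le_iff₀ hα]
          have heq : (n:ℝ)^(α/2) * (α*Cl^α) = Cl^α * (n:ℝ)^(α/2) * α := by ring
          linarith only [hn4, heq]
        calc (2*D/α) * (n:ℝ)^(α/2) ≤ (Cl^α * (n:ℝ)^(α/2)) * (n:ℝ)^(α/2) :=
              mul_le_mul_of_nonneg_right h1 hnα2.le
          _ = Cl^α * ((n:ℝ)^(α/2) * (n:ℝ)^(α/2)) := by ring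
          _ = Cl^α * (n:ℝ)^α := by rw [← Real.rpow_add hnpos]; norm_num
      calc D * x ≤ D * ((2/α) * (n:ℝ)^(α/2)) :=
            mul_le_mul_of_nonneg_left (le_trans hlogn hlog2) hD.le
        _ = (2*D/α) * (n:ℝ)^(α/2) := by ring
        _ ≤ Cl^α * (n:ℝ)^α := hstep
        _ ≤ (K n : ℝ) := hKlb
    have hmK : m ≤ K n := by
      have h : (m:ℝ) ≤ (K n : ℝ) := le_trans hmD hDxK
      exact_mod_cast h
    -- Step A : c m ≤ E / Nr
    have hcm : c m ≤ E / Nr := by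
      have hdm := (hdecay m hm1).2
      have hexp1 : Real.exp (-β * (m:ℝ)) ≤ (1/Nr) * x ^ (-(θ1+1)) := by
        have hβa : β * a = x + (θ1+1)*y := by rw [ha_def]; field_simp
        have h1 : -β * (m:ℝ) ≤ -(x + (θ1+1)*y) := by
          have h2 : β * a ≤ β * (m:ℝ) := mul_le_mul_of_nonneg_left hma hβ.le
          linarith
        calc Real.exp (-β * (m:ℝ)) ≤ Real.exp (-(x + (θ1+1)*y)) := Real.exp_le_exp.mpr h1
          _ = Real.exp (-x) * Real.exp (-((θ1+1)*y)) := by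
              rw [← Real.exp_add]; ring_nf
          _ = (1/Nr) * x ^ (-(θ1+1)) := by
              rw [Real.rpow_def_of_pos hxpos, ← hy_def, hx_def,
                Real.exp_neg, Real.exp_log hN, one_div]
              congr 1
              ring_nf
      have hmθ : (m:ℝ)^θ1 ≤ D^θ1 * x^θ1 := by
        calc (m:ℝ)^θ1 ≤ (D*x)^θ1 :=
              Real.rpow_le_rpow (Nat.cast_nonneg _) hmD hθ1
          _ = D^θ1 * x^θ1 := Real.mul_rpow hD.le hxpos.le
      have hxx : x^θ1 * x^(-(θ1+1)) ≤ 1 := by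
        rw [← Real.rpow_add hxpos]
        have h : θ1 + -(θ1+1) = -1 := by ring
        rw [h, Real.rpow_neg_one]
        exact inv_le_one_of_one_le₀ hx1
      have hmθ0 : (0:ℝ) ≤ (m:ℝ)^θ1 := Real.rpow_nonneg (Nat.cast_nonneg _) _
      have hxθ0 : (0:ℝ) ≤ x^θ1 := Real.rpow_nonneg hxpos.le _
      have hxθ0' : (0:ℝ) ≤ x^(-(θ1+1)) := Real.rpow_nonneg hxpos.le _
      have hDθ0 : (0:ℝ) ≤ D^θ1 := Real.rpow_nonneg hD.le _
      calc c m ≤ C2 * (m:ℝ)^θ1 * Real.exp (-β * (m:ℝ)) := hdm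
        _ ≤ C2 * (D^θ1 * x^θ1) * ((1/Nr) * x^(-(θ1+1))) := by
            apply mul_le_mul (mul_le_mul_of_nonneg_left hmθ hC2.le) hexp1
              (Real.exp_nonneg _) (by positivity)
        _ = (C2 * D^θ1) * (x^θ1 * x^(-(θ1+1))) / Nr := by ring
        _ ≤ (C2 * D^θ1) * 1 / Nr := by gcongr
        _ = E / Nr := by rw [hE_def]; ring
    -- Step B : optimality against m
    obtain ⟨hkmem, hkopt⟩ := hkstar n
    obtain ⟨hk1, hkK⟩ := Finset.mem_Icc.mp hkmem
    set k : ℕ := kstar n with hk_def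
    clear_value k
    have hLkm : L n k ≤ L n m := hkopt m (Finset.mem_Icc.mpr ⟨hm1, hmK⟩)
    rw [hL n k, hL n m, ← hNr_def] at hLkm
    have hLm_ub : (k:ℝ)/Nr*σ2 + c k ≤ ((m:ℝ)*σ2 + E)/Nr := by
      calc (k:ℝ)/Nr*σ2 + c k ≤ (m:ℝ)/Nr*σ2 + c m := hLkm
        _ ≤ (m:ℝ)/Nr*σ2 + E/Nr := by linarith
        _ = ((m:ℝ)*σ2 + E)/Nr := by field_simp
    have hkub : (k:ℝ) ≤ (m:ℝ) + E/σ2 := by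
      have h2 : (k:ℝ)/Nr*σ2 ≤ ((m:ℝ)*σ2 + E)/Nr := by
        have := hnonneg k; linarith
      rw [div_mul_eq_mul_div, div_le_div_iff₀ hN hN] at h2
      have h3 : (k:ℝ)*σ2 ≤ (m:ℝ)*σ2 + E := le_of_mul_le_mul_right h2 hN
      have h4 : ((k:ℝ) - m) * σ2 ≤ E := by linarith only [h3]
      have h5 : (k:ℝ) - m ≤ E/σ2 := (le_div_iff₀ hσ2).mpr h4
      linarith
    -- upper deviation
    have hupper : (k:ℝ) - 1/β * x ≤ C * y := by
      have ha_eq : a = 1/β * x + ((θ1+1)/β) * y := by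
        rw [ha_def]; field_simp; try ring
      have h1 : (k:ℝ) ≤ 1/β * x + ((θ1+1)/β) * y + 1 + E/σ2 := by
        rw [ha_eq] at hmup; linarith
      have h2 : (1:ℝ) + E/σ2 ≤ (1 + E/σ2) * y :=
        le_mul_of_one_le_right (by positivity) hy1
      have h3 : ((θ1+1)/β) * y + (1 + E/σ2) * y ≤ C * y := by
        have hc2 : ((θ1+1)/β) + (1 + E/σ2) ≤ C := by
          rw [hC_def]
          have : (0:ℝ) ≤ (θ1+2)/β := by positivity
          linarith
        have h6 := mul_le_mul_of_nonneg_right hc2 hy0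
        linarith only [h6]
      linarith only [h1, h2, h3]
    -- Step C : upper bound on c k, then lower deviation
    have hck_ub : c k ≤ F * x / Nr := by
      have h1 : c k ≤ ((m:ℝ)*σ2 + E)/Nr := by
        have h2 : (0:ℝ) ≤ (k:ℝ)/Nr*σ2 := by positivity
        linarith
      have h3 : (m:ℝ)*σ2 + E ≤ F * x := by
        rw [hF_def]
        have h4 : (m:ℝ)*σ2 ≤ D*x*σ2 := mul_le_mul_of_nonneg_right hmD hσ2.le
        have h5 : E ≤ E * x := le_mul_of_one_le_right hE.le hx1
        linarith only [h4, h5]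
      calc c k ≤ ((m:ℝ)*σ2 + E)/Nr := h1
        _ ≤ F * x / Nr := by gcongr
    have hβθ : (0:ℝ) < C1 * β^θ1 := by
      have : (0:ℝ) < β^θ1 := Real.rpow_pos_of_pos hβ _
      positivity
    have hlower : 1/β * x - (k:ℝ) ≤ C * y := by
      by_contra hcon
      push_neg at hcon
      have hCy : ((θ1+2)/β) * y ≤ C * y := by
        apply mul_le_mul_of_nonneg_right _ hy0
        rw [hC_def]
        have : (0:ℝ) ≤ (θ1+1)/β := by positivity
        have : (0:ℝ) ≤ E/σ2 := by positivity
        linarith [show (0:ℝ) ≤ (θ1+1)/β by positivity]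
      have hkz : (k:ℝ) < 1/β * x - ((θ1+2)/β) * y := by linarith
      have hkpos : (0:ℝ) < (k:ℝ) := by exact_mod_cast hk1
      have hk1R : (1:ℝ) ≤ (k:ℝ) := by exact_mod_cast hk1
      have hθ2y : (0:ℝ) ≤ ((θ1+2)/β) * y := mul_nonneg (by positivity) hy0
      have hkxβ : (k:ℝ) ≤ x/β := by
        have h : 1/β * x = x/β := by ring
        linarith
      -- exp lower bound
      have hexp2 : (1/Nr) * x^(θ1+2) ≤ Real.exp (-β * (k:ℝ)) := by
        have h2 : β * (1/β * x - ((θ1+2)/β) * y) = x - (θ1+2)*y := by field_simp; try ring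
        have h1 : -(x - (θ1+2)*y) ≤ -β * (k:ℝ) := by
          have h3 := mul_lt_mul_of_pos_left hkz hβ
          rw [h2] at h3
          linarith
        calc (1/Nr) * x^(θ1+2) = Real.exp (-x) * Real.exp ((θ1+2)*y) := by
              rw [Real.rpow_def_of_pos hxpos, ← hy_def, hx_def,
                Real.exp_neg, Real.exp_log hN, one_div]
              congr 1
              ring_nf
          _ = Real.exp (-(x - (θ1+2)*y)) := by rw [← Real.exp_add]; ring_nf
          _ ≤ Real.exp (-β * (k:ℝ)) := Real.exp_le_exp.mpr h1
      have hkθ : x^(-θ1) * β^θ1 ≤ (k:ℝ)^(-θ1) := by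
        have h1 : (x/β)^(-θ1) ≤ (k:ℝ)^(-θ1) :=
          Real.rpow_le_rpow_of_nonpos hkpos hkxβ (neg_nonpos.mpr hθ1)
        have h2 : (x/β)^(-θ1) = x^(-θ1) * β^θ1 := by
          rw [Real.div_rpow hxpos.le hβ.le, Real.rpow_neg hβ.le, div_inv_eq_mul]
        rwa [h2] at h1
      have hclow : C1 * β^θ1 * (x * x) / Nr ≤ c k := by
        have hd := (hdecay k hk1).1
        have hx2pos : (0:ℝ) ≤ x^(θ1+2) := Real.rpow_nonneg hxpos.le _
        have hxneg0 : (0:ℝ) ≤ x^(-θ1) := Real.rpow_nonneg hxpos.le _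
        have hβθ0 : (0:ℝ) ≤ β^θ1 := Real.rpow_nonneg hβ.le _
        have h1 : C1 * (x^(-θ1) * β^θ1) * ((1/Nr) * x^(θ1+2)) ≤
            C1 * (k:ℝ)^(-θ1) * Real.exp (-β * (k:ℝ)) := by
          apply mul_le_mul (mul_le_mul_of_nonneg_left hkθ hC1.le) hexp2
            (by positivity) (by positivity)
        have h2 : C1 * (x^(-θ1) * β^θ1) * ((1/Nr) * x^(θ1+2)) =
            C1 * β^θ1 * (x^(-θ1) * x^(θ1+2)) / Nr := by ring
        have h3 : x^(-θ1) * x^(θ1+2) = x * x := by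
          rw [← Real.rpow_add hxpos]
          have h4 : -θ1 + (θ1+2) = 2 := by ring
          rw [h4, show ((2:ℝ) = ((2:ℕ):ℝ)) by norm_num, Real.rpow_natCast]
          ring
        rw [h2, h3] at h1
        linarith
      -- contradiction
      have hcomb : C1 * β^θ1 * (x*x) ≤ F * x := by
        have h1 : C1 * β^θ1 * (x*x) / Nr ≤ F * x / Nr := le_trans hclow hck_ub
        rw [div_le_div_iff₀ hN hN] at h1
        exact le_of_mul_le_mul_right h1 hN
      have hxbig : F < C1 * β^θ1 * x := by
        have h1 : F/(C1 * β^θ1) < x := by linarith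
        rw [div_lt_iff₀ hβθ] at h1
        linarith only [h1]
      have h7 := mul_lt_mul_of_pos_right hxbig hxpos
      linarith only [hcomb, h7]
    rw [abs_le]
    exact ⟨by linarith, by linarith⟩
  rw [eventually_atTop] at Emain
  obtain ⟨n0, hn0⟩ := Emain
  exact ⟨n0, hn0⟩
end

section
/- Let σ² > 0, θ_1 ≥ 0, β > 0, 0 < C_1 ≤ C_2, and let c : ℕ → ℝ be a nonincreasing nonnegative sequence satisfying C_1 k^{−θ_1} e^{−βk} ≤ c_k ≤ C_2 k^{θ_1} e^{−βk} for all k ≥ 1. Let K_n satisfy C_l ≤ K_n^{2+δ_1}/n ≤ C_u for some positive δ_1, C_l, C_u, set N = n − K_n, L_n(k) = (k/N)σ² + c_k for 1 ≤ k ≤ K_n, and let k_n* minimize L_n over {1,…,K_n}. Then for every η ∈ (0,1) there exists C_3 > 0 such that for all sufficiently large n and all k ∈ {1,…,K_n} with |k − k_n*| > (k_n*)^η, N(L_n(k) − L_n(k_n*)) / |k − k_n*| ≥ C_3. Consequently, for any ξ > 0, condition (K.6) is satisfied with any θ ∈ (0,1). -/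
open Filter

open Real in
lemma aux_tendsto (p b ηe : ℝ) (hb : 0 < b) (hη : 0 < ηe) :
    Tendsto (fun t : ℝ => t ^ p * Real.exp (-b * t ^ ηe)) atTop (nhds 0) := by
  have h1 := tendsto_rpow_mul_exp_neg_mul_atTop_nhds_zero (p / ηe) b hb
  have h3 := h1.comp (tendsto_rpow_atTop hη)
  apply h3.congr'
  filter_upwards [eventually_gt_atTop (0:ℝ)] with t ht
  simp only [Function.comp_apply]
  congr 1
  rw [← Real.rpow_mul ht.le]
  congr 1
  field_simp

lemma aux_small (p b ηe ε : ℝ) (hb : 0 < b) (hη : 0 < ηe) (hε : 0 < ε) :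
    ∃ M : ℕ, ∀ m : ℕ, M ≤ m → (m : ℝ) ^ p * Real.exp (-b * (m : ℝ) ^ ηe) ≤ ε := by
  have h := (aux_tendsto p b ηe hb hη).comp tendsto_natCast_atTop_atTop
  have h2 := h.eventually_lt_const hε
  rw [eventually_atTop] at h2
  obtain ⟨M, hM⟩ := h2
  exact ⟨M, fun m hm => (hM m hm).le⟩

open Real in
lemma aux_big (A ηe : ℝ) (hη : 0 < ηe) :
    ∃ M : ℕ, ∀ m : ℕ, M ≤ m → A ≤ (m : ℝ) ^ ηe := by
  have h := (tendsto_rpow_atTop hη).comp (tendsto_natCast_atTop_atTop (R := ℝ))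
  have h2 := h.eventually_ge_atTop A
  rw [eventually_atTop] at h2
  exact h2

set_option maxHeartbeats 2000000 in
/-- exponential-decay case — the basin inequality (3.4) for
`L_n(k) = (k/N)σ² + c_k` with exponentially decaying `c_k`, and the consequence that
condition (K.6) holds with any exponent `θ ∈ (0,1)` for any `ξ > 0`. -/
theorem stmt_15
    (σ2 θ1 β C1 C2 : ℝ) (hσ2 : 0 < σ2) (hθ1 : 0 ≤ θ1) (hβ : 0 < β)
    (hC1 : 0 < C1) (hC12 : C1 ≤ C2)
    (c : ℕ → ℝ) (hmono : Antitone c) (hnonneg : ∀ k, 0 ≤ c k)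
    (hdecay : ∀ k : ℕ, 1 ≤ k →
      C1 * (k : ℝ) ^ (-θ1) * Real.exp (-β * (k : ℝ)) ≤ c k ∧
      c k ≤ C2 * (k : ℝ) ^ θ1 * Real.exp (-β * (k : ℝ)))
    (K : ℕ → ℕ) (δ1 Cl Cu : ℝ) (hδ1 : 0 < δ1) (hCl : 0 < Cl) (hCu : 0 < Cu)
    (hK4 : ∀ n : ℕ, 1 ≤ n →
      Cl ≤ (K n : ℝ) ^ ((2 : ℝ) + δ1) / (n : ℝ) ∧ (K n : ℝ) ^ ((2 : ℝ) + δ1) / (n : ℝ) ≤ Cu)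
    (L : ℕ → ℕ → ℝ)
    (hL : ∀ n k, L n k = (k : ℝ) / ((n : ℝ) - (K n : ℝ)) * σ2 + c k)
    (kstar : ℕ → ℕ)
    (hkstar : ∀ n, kstar n ∈ Finset.Icc 1 (K n) ∧
      ∀ k ∈ Finset.Icc 1 (K n), L n (kstar n) ≤ L n k) :
    (∀ η : ℝ, 0 < η → η < 1 → ∃ C3 : ℝ, 0 < C3 ∧ ∃ n0 : ℕ, ∀ n ≥ n0,
      ∀ k ∈ Finset.Icc 1 (K n), (kstar n : ℝ) ^ η < |(k : ℝ) - (kstar n : ℝ)| →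
        C3 ≤ ((n : ℝ) - (K n : ℝ)) * (L n k - L n (kstar n)) / |(k : ℝ) - (kstar n : ℝ)|) ∧
    (∀ ξ : ℝ, 0 < ξ → ∀ θ : ℝ, 0 < θ → θ < 1 → ∃ Cbar : ℝ, 0 < Cbar ∧ ∃ n0 : ℕ, ∀ n ≥ n0,
      ∀ k ∈ Finset.Icc 1 (K n), (kstar n : ℝ) ^ θ ≤ |(k : ℝ) - (kstar n : ℝ)| →
        Cbar ≤ (kstar n : ℝ) ^ ξ *
          (((n : ℝ) - (K n : ℝ)) * (L n k - L n (kstar n)) / |(k : ℝ) - (kstar n : ℝ)|)) := by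
  have hC2 : 0 < C2 := lt_of_lt_of_le hC1 hC12
  -- K n ≥ 1 for n ≥ 1
  have hK1 : ∀ n : ℕ, 1 ≤ n → 1 ≤ K n := by
    intro n hn
    by_contra h
    push_neg at h
    have h0 : K n = 0 := by omega
    have h1 := (hK4 n hn).1
    have hn0 : (0:ℝ) < n := by exact_mod_cast hn
    rw [h0] at h1
    rw [show ((0:ℕ):ℝ) = 0 by norm_num,
      Real.zero_rpow (by positivity : (0:ℝ) < (2:ℝ)+δ1).ne', zero_div] at h1
    linarith
  have hKupper : ∀ n : ℕ, 1 ≤ n → (K n : ℝ) ^ ((2:ℝ)+δ1) ≤ Cu * (n:ℝ) := by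
    intro n hn
    have hn0 : (0:ℝ) < n := by exact_mod_cast hn
    have h := (hK4 n hn).2
    rw [div_le_iff₀ hn0] at h
    linarith
  have hKlowerR : ∀ n : ℕ, 1 ≤ n → Cl * (n:ℝ) ≤ (K n:ℝ) ^ ((2:ℝ)+δ1) := by
    intro n hn
    have hn0 : (0:ℝ) < n := by exact_mod_cast hn
    have h := (hK4 n hn).1
    rw [le_div_iff₀ hn0] at h
    linarith
  -- N ≥ n/2 eventually
  have hNev : ∀ᶠ n : ℕ in atTop, (n:ℝ)/2 ≤ (n:ℝ) - K n ∧ 0 < (n:ℝ) - K n := by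
    have h4Cu : ∀ᶠ n : ℕ in atTop, 4*Cu + 1 ≤ (n:ℝ) :=
      tendsto_natCast_atTop_atTop.eventually_ge_atTop _
    filter_upwards [h4Cu, eventually_ge_atTop 1] with n hCun hn1
    have hn0 : (0:ℝ) < n := by exact_mod_cast hn1
    have hKn : (K n : ℝ) ≤ (n:ℝ)/2 := by
      by_contra h
      push_neg at h
      have h1 : (1:ℝ) ≤ (K n:ℝ) := by exact_mod_cast hK1 n hn1
      have h2 : (K n:ℝ)^((2:ℝ)) ≤ (K n:ℝ)^((2:ℝ)+δ1) :=
        Real.rpow_le_rpow_of_exponent_le h1 (by linarith)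
      have h3 : (K n:ℝ)^((2:ℝ)) = (K n:ℝ)*(K n:ℝ) := by
        rw [show ((2:ℝ)) = ((2:ℕ):ℝ) by norm_num, Real.rpow_natCast]; ring
      have h4 := hKupper n hn1
      have h5 : (n:ℝ)/2*((n:ℝ)/2) ≤ (K n:ℝ)*(K n:ℝ) :=
        mul_le_mul h.le h.le (by linarith) (by linarith)
      have h6 : Cu * (n:ℝ) ≤ (((n:ℝ)-1)/4)*(n:ℝ) :=
        mul_le_mul_of_nonneg_right (by linarith) hn0.le
      rw [h3] at h2
      linarith [h5, h6]
    constructor <;> linarith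
  -- K n → ∞
  have hKM : ∀ M : ℕ, ∀ᶠ n : ℕ in atTop, M ≤ K n := by
    intro M
    have hev : ∀ᶠ n : ℕ in atTop, ((M:ℝ)^((2:ℝ)+δ1) + 1)/Cl ≤ (n:ℝ) :=
      tendsto_natCast_atTop_atTop.eventually_ge_atTop _
    filter_upwards [hev, eventually_ge_atTop 1] with n hn hn1
    by_contra h
    push_neg at h
    have h1 : (K n:ℝ) ≤ (M:ℝ) := by exact_mod_cast h.le
    have h2 : (K n:ℝ)^((2:ℝ)+δ1) ≤ (M:ℝ)^((2:ℝ)+δ1) :=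
      Real.rpow_le_rpow (by positivity) h1 (by linarith)
    have h3 := hKlowerR n hn1
    rw [div_le_iff₀ hCl] at hn
    linarith
  -- kstar → ∞
  have hkstarM : ∀ M : ℕ, ∀ᶠ n : ℕ in atTop, M ≤ kstar n := by
    intro M
    have h2p : (0:ℝ) < (2:ℝ)^θ1 := Real.rpow_pos_of_pos two_pos θ1
    obtain ⟨M1, hM1⟩ := aux_small (2*θ1) β 1 (C1/(4*C2*(2:ℝ)^θ1)) hβ one_pos
      (div_pos hC1 (by positivity))
    set M' := M + M1 + 1 with hM'def
    have hM'1 : 1 ≤ M' := by omega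
    have hM'pos : (0:ℝ) < M' := by exact_mod_cast hM'1
    have hT := hM1 M' (by omega)
    rw [Real.rpow_one] at hT
    have hεpos : 0 < C1*(M':ℝ)^(-θ1)*Real.exp (-β*(M':ℝ)) := by positivity
    have hev3 : ∀ᶠ n : ℕ in atTop,
        8*(M':ℝ)*σ2/(C1*(M':ℝ)^(-θ1)*Real.exp (-β*(M':ℝ))) ≤ (n:ℝ) :=
      tendsto_natCast_atTop_atTop.eventually_ge_atTop _
    filter_upwards [hKM (2*M'), hNev, hev3] with n hKn hN hbig
    obtain ⟨hN2, hN0⟩ := hN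
    by_contra hcon
    push_neg at hcon
    have hks : kstar n ≤ M' := by omega
    have hm := (hkstar n).1
    rw [Finset.mem_Icc] at hm
    have hmin := (hkstar n).2
    have hc1 : C1*(M':ℝ)^(-θ1)*Real.exp (-β*(M':ℝ)) ≤ c (kstar n) :=
      le_trans ((hdecay M' hM'1).1) (hmono hks)
    have hmem2 : 2*M' ∈ Finset.Icc 1 (K n) := Finset.mem_Icc.mpr ⟨by omega, hKn⟩
    have hL2 := hmin (2*M') hmem2
    simp only [hL] at hL2
    have hcast : ((2*M':ℕ):ℝ) = 2*(M':ℝ) := by push_cast; ring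
    rw [hcast] at hL2
    have hterm0 : 0 ≤ (kstar n:ℝ)/((n:ℝ)-K n)*σ2 :=
      mul_nonneg (div_nonneg (by positivity) hN0.le) hσ2.le
    have hc2M : c (2*M') ≤ (C1*(M':ℝ)^(-θ1)*Real.exp (-β*(M':ℝ)))/4 := by
      have h2 := (hdecay (2*M') (by omega)).2
      rw [hcast] at h2
      have e1 : (2*(M':ℝ))^θ1 = (2:ℝ)^θ1*(M':ℝ)^θ1 := Real.mul_rpow (by norm_num) hM'pos.le
      have e2 : Real.exp (-β*(2*(M':ℝ))) = Real.exp (-β*(M':ℝ))*Real.exp (-β*(M':ℝ)) := by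
        rw [← Real.exp_add]; ring_nf
      have e3 : (M':ℝ)^θ1 = (M':ℝ)^(2*θ1)*(M':ℝ)^(-θ1) := by
        rw [← Real.rpow_add hM'pos]; ring_nf
      calc c (2*M') ≤ C2*(2*(M':ℝ))^θ1*Real.exp (-β*(2*(M':ℝ))) := h2
        _ = (C2*(2:ℝ)^θ1)*((M':ℝ)^(2*θ1)*Real.exp (-β*(M':ℝ)))*((M':ℝ)^(-θ1)*Real.exp (-β*(M':ℝ))) := by
            rw [e1, e2, e3]; ring
        _ ≤ (C2*(2:ℝ)^θ1)*(C1/(4*C2*(2:ℝ)^θ1))*((M':ℝ)^(-θ1)*Real.exp (-β*(M':ℝ))) := by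
            apply mul_le_mul_of_nonneg_right (mul_le_mul_of_nonneg_left hT (by positivity)) (by positivity)
        _ = (C1*(M':ℝ)^(-θ1)*Real.exp (-β*(M':ℝ)))/4 := by
            field_simp
    have hterm : (2*(M':ℝ))/((n:ℝ)-K n)*σ2 ≤ (C1*(M':ℝ)^(-θ1)*Real.exp (-β*(M':ℝ)))/2 := by
      have h1 : 4*(M':ℝ)*σ2/(C1*(M':ℝ)^(-θ1)*Real.exp (-β*(M':ℝ))) ≤ ((n:ℝ)-K n) := by
        rw [div_le_iff₀ hεpos] at hbig ⊢
        nlinarith [mul_le_mul_of_nonneg_right hN2 hεpos.le]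
      rw [div_le_iff₀ hεpos] at h1
      rw [div_mul_eq_mul_div, div_le_iff₀ hN0]
      nlinarith [hσ2, hεpos]
    linarith [hc1, hL2, hterm0, hterm, hc2M, hεpos]
  -- main inequality
  have part1 : ∀ η : ℝ, 0 < η → η < 1 → ∃ n0 : ℕ, ∀ n ≥ n0,
      ∀ k ∈ Finset.Icc 1 (K n), (kstar n : ℝ) ^ η < |(k : ℝ) - (kstar n : ℝ)| →
        σ2/2 ≤ ((n : ℝ) - (K n : ℝ)) * (L n k - L n (kstar n)) / |(k : ℝ) - (kstar n : ℝ)| := by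
    intro η hη0 hη1
    have heβ : (0:ℝ) < Real.exp β := Real.exp_pos β
    obtain ⟨Ma, hMa⟩ := aux_big 8 η hη0
    obtain ⟨Mb, hMb⟩ := aux_small (2*θ1) (β/8) η (C1/(2*C2*(2:ℝ)^θ1)) (by positivity) hη0
      (div_pos hC1 (by positivity))
    obtain ⟨Mc, hMc⟩ := aux_small (2*θ1) β η (C1/(2*C2)) hβ hη0 (div_pos hC1 (by positivity))
    obtain ⟨Md, hMd⟩ := aux_small (2*θ1+1) β η (C1/(4*C2*Real.exp β)) hβ hη0
      (div_pos hC1 (by positivity))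
    have hev := ((hkstarM (Ma+Mb+Mc+Md+2)).and hNev)
    rw [eventually_atTop] at hev
    obtain ⟨n0, hn0⟩ := hev
    refine ⟨n0, ?_⟩
    intro n hn k hkmem hfar
    set m := kstar n with hmdef
    obtain ⟨hMm, hN2, hN0⟩ := hn0 n hn
    have hm := (hkstar n).1
    rw [Finset.mem_Icc] at hm
    have hmin := (hkstar n).2
    rw [Finset.mem_Icc] at hkmem
    have hm1 : 1 ≤ m := hm.1
    have hmpos : (0:ℝ) < m := by exact_mod_cast hm1
    have hx8 : (8:ℝ) ≤ (m:ℝ)^η := hMa m (by omega)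
    have hx0 : (0:ℝ) < (m:ℝ)^η := by linarith
    have hxm : (m:ℝ)^η ≤ (m:ℝ) := by
      calc (m:ℝ)^η ≤ (m:ℝ)^(1:ℝ) :=
        Real.rpow_le_rpow_of_exponent_le (by exact_mod_cast hm1) hη1.le
      _ = (m:ℝ) := Real.rpow_one _
    have hs0 : 0 < |(k:ℝ) - (m:ℝ)| := lt_trans hx0 hfar
    have hPneg : (0:ℝ) ≤ (m:ℝ)^(-θ1) := Real.rpow_nonneg (by positivity) _
    have hPsplit : (m:ℝ)^θ1 = (m:ℝ)^(2*θ1)*(m:ℝ)^(-θ1) := by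
      rw [← Real.rpow_add hmpos]; ring_nf
    have hkey : ((n:ℝ) - K n) * (L n k - L n m) = ((k:ℝ) - m)*σ2 + ((n:ℝ)-K n)*(c k - c m) := by
      simp only [hL]
      field_simp
      ring
    rw [le_div_iff₀ hs0]
    rcases lt_trichotomy k m with hcase | hcase | hcase
    · -- k < m : lower case
      have hkm : (k:ℝ) < m := by exact_mod_cast hcase
      have hs : |(k:ℝ) - (m:ℝ)| = (m:ℝ) - k := by
        rw [abs_of_neg (by linarith : (k:ℝ) - (m:ℝ) < 0)]; ring
      rw [hs] at hfar ⊢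
      have hm2 : 2 ≤ m := by omega
      have hk1R : (1:ℝ) ≤ (k:ℝ) := by exact_mod_cast hkmem.1
      have hkpos : (0:ℝ) < k := by linarith
      -- lower bound on c k
      have ha2 : (m:ℝ)^(-θ1) ≤ (k:ℝ)^(-θ1) :=
        Real.rpow_le_rpow_of_nonpos hkpos hkm.le (by linarith)
      have hck : C1*((m:ℝ)^(-θ1))*Real.exp (-β*(k:ℝ)) ≤ c k := by
        refine le_trans ?_ (hdecay k hkmem.1).1
        apply mul_le_mul_of_nonneg_right (mul_le_mul_of_nonneg_left ha2 hC1.le) (Real.exp_pos _).le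
      -- upper bound on c m
      have hT2 : C2*((m:ℝ)^(2*θ1)*Real.exp (-β*(m:ℝ)^η)) ≤ C1/2 := by
        have hX := hMc m (by omega)
        rw [le_div_iff₀ (by positivity)] at hX
        nlinarith [hX]
      have hexpm : Real.exp (-β*(m:ℝ)) ≤ Real.exp (-β*(m:ℝ)^η)*Real.exp (-β*(k:ℝ)) := by
        rw [← Real.exp_add]
        apply Real.exp_le_exp.mpr
        nlinarith [mul_le_mul_of_nonneg_left (show (m:ℝ)^η + (k:ℝ) ≤ (m:ℝ) by linarith) hβ.le]
      have hcmup : c m ≤ (C1/2)*((m:ℝ)^(-θ1)*Real.exp (-β*(k:ℝ))) := by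
        calc c m ≤ C2*(m:ℝ)^θ1*Real.exp (-β*(m:ℝ)) := (hdecay m hm1).2
        _ ≤ C2*(m:ℝ)^θ1*(Real.exp (-β*(m:ℝ)^η)*Real.exp (-β*(k:ℝ))) := by
            apply mul_le_mul_of_nonneg_left hexpm (by positivity)
        _ = (C2*((m:ℝ)^(2*θ1)*Real.exp (-β*(m:ℝ)^η)))*((m:ℝ)^(-θ1)*Real.exp (-β*(k:ℝ))) := by
            rw [hPsplit]; ring
        _ ≤ (C1/2)*((m:ℝ)^(-θ1)*Real.exp (-β*(k:ℝ))) := by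
            apply mul_le_mul_of_nonneg_right hT2 (by positivity)
      -- minimality at m-1 gives a lower bound on exp(-β m)
      have hmem1 : m - 1 ∈ Finset.Icc 1 (K n) := Finset.mem_Icc.mpr ⟨by omega, by omega⟩
      have hmin1 := hmin (m-1) hmem1
      simp only [hL] at hmin1
      have hcast1 : ((m-1:ℕ):ℝ) = (m:ℝ)-1 := by
        rw [Nat.cast_sub hm1, Nat.cast_one]
      rw [hcast1] at hmin1
      have hexp2 : ((m:ℝ)-1)/((n:ℝ)-K n)*σ2
          = (m:ℝ)/((n:ℝ)-K n)*σ2 - 1/((n:ℝ)-K n)*σ2 := by ring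
      rw [hexp2] at hmin1
      have hσN : 1/((n:ℝ)-K n)*σ2 ≤ c (m-1) := by linarith [hnonneg m]
      have hcm1up : c (m-1) ≤ C2*(m:ℝ)^θ1*Real.exp β*Real.exp (-β*(m:ℝ)) := by
        have h1 := (hdecay (m-1) (by omega)).2
        rw [hcast1] at h1
        calc c (m-1) ≤ C2*((m:ℝ)-1)^θ1*Real.exp (-β*((m:ℝ)-1)) := h1
        _ ≤ C2*(m:ℝ)^θ1*Real.exp (-β*((m:ℝ)-1)) := by
            apply mul_le_mul_of_nonneg_right
              (mul_le_mul_of_nonneg_left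
                (Real.rpow_le_rpow (by linarith) (by linarith) hθ1) hC2.le)
              (Real.exp_pos _).le
        _ = C2*(m:ℝ)^θ1*(Real.exp β*Real.exp (-β*(m:ℝ))) := by
            rw [← Real.exp_add]; ring_nf
        _ = C2*(m:ℝ)^θ1*Real.exp β*Real.exp (-β*(m:ℝ)) := by ring
      have hQ : σ2 ≤ ((n:ℝ)-K n)*Real.exp (-β*(m:ℝ))*(C2*(m:ℝ)^θ1*Real.exp β) := by
        have h1 : 1/((n:ℝ)-K n)*σ2*((n:ℝ)-K n) = σ2 := by field_simp
        calc σ2 = 1/((n:ℝ)-K n)*σ2*((n:ℝ)-K n) := h1.symm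
        _ ≤ (C2*(m:ℝ)^θ1*Real.exp β*Real.exp (-β*(m:ℝ)))*((n:ℝ)-K n) :=
            mul_le_mul_of_nonneg_right (le_trans hσN hcm1up) hN0.le
        _ = ((n:ℝ)-K n)*Real.exp (-β*(m:ℝ))*(C2*(m:ℝ)^θ1*Real.exp β) := by ring
      -- T3 consequence
      have hT3x := hMd m (by omega)
      have hsplit21 : (m:ℝ)^(2*θ1+1) = (m:ℝ)^(2*θ1)*(m:ℝ) := by
        rw [Real.rpow_add hmpos, Real.rpow_one]
      have he1 : Real.exp (-β*(m:ℝ)^η)*Real.exp (β*(m:ℝ)^η) = 1 := by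
        rw [← Real.exp_add]; ring_nf; exact Real.exp_zero
      have hT3' : 4*C2*Real.exp β*((m:ℝ)^(2*θ1)*(m:ℝ)) ≤ C1*Real.exp (β*(m:ℝ)^η) := by
        have h2 : (m:ℝ)^(2*θ1+1)*Real.exp (-β*(m:ℝ)^η)*(4*C2*Real.exp β*Real.exp (β*(m:ℝ)^η))
            ≤ (C1/(4*C2*Real.exp β))*(4*C2*Real.exp β*Real.exp (β*(m:ℝ)^η)) :=
          mul_le_mul_of_nonneg_right hT3x (by positivity)
        have h3 : (C1/(4*C2*Real.exp β))*(4*C2*Real.exp β*Real.exp (β*(m:ℝ)^η))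
            = C1*Real.exp (β*(m:ℝ)^η) := by field_simp
        rw [h3] at h2
        calc 4*C2*Real.exp β*((m:ℝ)^(2*θ1)*(m:ℝ))
            = (m:ℝ)^(2*θ1)*(m:ℝ)*(Real.exp (-β*(m:ℝ)^η)*Real.exp (β*(m:ℝ)^η))*(4*C2*Real.exp β) := by
              rw [he1]; ring
        _ = (m:ℝ)^(2*θ1+1)*Real.exp (-β*(m:ℝ)^η)*(4*C2*Real.exp β*Real.exp (β*(m:ℝ)^η)) := by
            rw [hsplit21]; ring
        _ ≤ C1*Real.exp (β*(m:ℝ)^η) := h2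
      -- combine
      have hPP : (m:ℝ)^θ1*(m:ℝ)^(-θ1) = 1 := by
        rw [← Real.rpow_add hmpos]; simp
      have hQ0 : 0 ≤ ((n:ℝ)-K n)*Real.exp (-β*(m:ℝ)) :=
        mul_nonneg hN0.le (Real.exp_pos _).le
      have hdiff : (C1/2)*((m:ℝ)^(-θ1)*Real.exp (-β*(k:ℝ))) ≤ c k - c m := by
        linarith [hck, hcmup]
      have hEk : Real.exp (β*(m:ℝ)^η)*Real.exp (-β*(m:ℝ)) ≤ Real.exp (-β*(k:ℝ)) := by
        rw [← Real.exp_add]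
        apply Real.exp_le_exp.mpr
        nlinarith [mul_le_mul_of_nonneg_left (show (m:ℝ)^η + (k:ℝ) ≤ (m:ℝ) by linarith) hβ.le]
      have h1 : (C1/2)*((m:ℝ)^(-θ1))*(Real.exp (β*(m:ℝ)^η)*(((n:ℝ)-K n)*Real.exp (-β*(m:ℝ))))
          ≤ ((n:ℝ)-K n)*(c k - c m) := by
        calc (C1/2)*((m:ℝ)^(-θ1))*(Real.exp (β*(m:ℝ)^η)*(((n:ℝ)-K n)*Real.exp (-β*(m:ℝ))))
            = ((n:ℝ)-K n)*((C1/2)*((m:ℝ)^(-θ1)*(Real.exp (β*(m:ℝ)^η)*Real.exp (-β*(m:ℝ))))) := by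
              ring
        _ ≤ ((n:ℝ)-K n)*((C1/2)*((m:ℝ)^(-θ1)*Real.exp (-β*(k:ℝ)))) := by
            apply mul_le_mul_of_nonneg_left ?_ hN0.le
            apply mul_le_mul_of_nonneg_left ?_ (by positivity)
            apply mul_le_mul_of_nonneg_left hEk hPneg
        _ ≤ ((n:ℝ)-K n)*(c k - c m) := mul_le_mul_of_nonneg_left hdiff hN0.le
      -- putting it together : 2 σ2 m ≤ N (c k - c m)
      have hs1 : 2*(m:ℝ)*σ2 ≤
          2*(m:ℝ)*(((n:ℝ)-K n)*Real.exp (-β*(m:ℝ))*(C2*(m:ℝ)^θ1*Real.exp β)) :=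
        mul_le_mul_of_nonneg_left hQ (by positivity)
      have he2 : (C1*Real.exp (β*(m:ℝ)^η))*(((m:ℝ)^(-θ1))*(((n:ℝ)-K n)*Real.exp (-β*(m:ℝ))))/2
          = (C1/2)*((m:ℝ)^(-θ1))*(Real.exp (β*(m:ℝ)^η)*(((n:ℝ)-K n)*Real.exp (-β*(m:ℝ)))) := by
        ring
      have hstep : 4*C2*Real.exp β*((m:ℝ)^(2*θ1)*(m:ℝ))*(((m:ℝ)^(-θ1))*(((n:ℝ)-K n)*Real.exp (-β*(m:ℝ))))/2
          ≤ (C1*Real.exp (β*(m:ℝ)^η))*(((m:ℝ)^(-θ1))*(((n:ℝ)-K n)*Real.exp (-β*(m:ℝ))))/2 := by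
        linarith [mul_le_mul_of_nonneg_right hT3' (mul_nonneg hPneg hQ0)]
      have hP2P : (m:ℝ)^(2*θ1)*(m:ℝ)^(-θ1) = (m:ℝ)^θ1 := by
        rw [← Real.rpow_add hmpos]; ring_nf
      have he3 : 4*C2*Real.exp β*((m:ℝ)^(2*θ1)*(m:ℝ))*(((m:ℝ)^(-θ1))*(((n:ℝ)-K n)*Real.exp (-β*(m:ℝ))))/2
          = 2*(m:ℝ)*(((n:ℝ)-K n)*Real.exp (-β*(m:ℝ))*(C2*(m:ℝ)^θ1*Real.exp β)) := by
        calc 4*C2*Real.exp β*((m:ℝ)^(2*θ1)*(m:ℝ))*(((m:ℝ)^(-θ1))*(((n:ℝ)-K n)*Real.exp (-β*(m:ℝ))))/2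
            = 2*(m:ℝ)*(((n:ℝ)-K n)*Real.exp (-β*(m:ℝ))*(C2*((m:ℝ)^(2*θ1)*(m:ℝ)^(-θ1))*Real.exp β)) := by
              ring
        _ = 2*(m:ℝ)*(((n:ℝ)-K n)*Real.exp (-β*(m:ℝ))*(C2*(m:ℝ)^θ1*Real.exp β)) := by rw [hP2P]
      have hfinal : 2*σ2*(m:ℝ) ≤ ((n:ℝ)-K n)*(c k - c m) := by
        linarith [hs1, hstep, h1, he3, he2]
      rw [hkey]
      have hσm : 0 ≤ σ2*(m:ℝ) := by positivity
      have hσk : 0 ≤ σ2*(k:ℝ) := by positivity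
      linarith [hfinal, hσm, hσk]
    · subst hcase
      simp only [sub_self, abs_zero] at hfar
      linarith
    · -- m < k : upper case
      have hkm : (m:ℝ) < k := by exact_mod_cast hcase
      have hs : |(k:ℝ) - (m:ℝ)| = (k:ℝ) - m := abs_of_pos (by linarith)
      rw [hs] at hfar ⊢
      obtain ⟨j, hj8, hjlt⟩ : ∃ j : ℕ, (m:ℝ)^η/8 ≤ (j:ℝ) ∧ (j:ℝ) < (m:ℝ)^η/8 + 1 :=
        ⟨Nat.ceil ((m:ℝ)^η/8), Nat.le_ceil _, Nat.ceil_lt_add_one (by positivity)⟩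
      have hjx4 : (j:ℝ) ≤ (m:ℝ)^η/4 := by linarith
      have hjk : (m:ℝ) + (j:ℝ) < (k:ℝ) := by linarith
      have hjkn : m + j < k := by exact_mod_cast (by push_cast; linarith : ((m+j:ℕ):ℝ) < (k:ℝ))
      have hmemj : m + j ∈ Finset.Icc 1 (K n) := Finset.mem_Icc.mpr ⟨by omega, by omega⟩
      have hcm_low : C1*(m:ℝ)^(-θ1)*Real.exp (-β*(m:ℝ)) ≤ c m := (hdecay m hm1).1
      have hT1 : C2*(2:ℝ)^θ1*((m:ℝ)^(2*θ1)*Real.exp (-(β/8)*(m:ℝ)^η)) ≤ C1/2 := by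
        have hX := hMb m (by omega)
        have h2p : (0:ℝ) < (2:ℝ)^θ1 := Real.rpow_pos_of_pos two_pos θ1
        rw [le_div_iff₀ (by positivity)] at hX
        nlinarith [hX]
      have hcast : ((m+j:ℕ):ℝ) = (m:ℝ)+(j:ℝ) := by push_cast; ring
      have hcmj : c (m+j) ≤ (C1*((m:ℝ)^(-θ1))*Real.exp (-β*(m:ℝ)))/2 := by
        have h1 := (hdecay (m+j) (by omega)).2
        rw [hcast] at h1
        have hb1 : ((m:ℝ)+(j:ℝ))^θ1 ≤ (2:ℝ)^θ1*(m:ℝ)^θ1 := by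
          rw [← Real.mul_rpow (by norm_num) hmpos.le]
          exact Real.rpow_le_rpow (by positivity) (by linarith) hθ1
        have hb2 : Real.exp (-β*((m:ℝ)+(j:ℝ))) = Real.exp (-β*(m:ℝ)) * Real.exp (-β*(j:ℝ)) := by
          rw [← Real.exp_add]; ring_nf
        have hb3 : Real.exp (-β*(j:ℝ)) ≤ Real.exp (-(β/8)*(m:ℝ)^η) := by
          apply Real.exp_le_exp.mpr
          nlinarith [mul_le_mul_of_nonneg_left hj8 hβ.le]
        have hb4 : 0 ≤ Real.exp (-β*((m:ℝ))) := (Real.exp_pos _).le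
        calc c (m+j) ≤ C2*((m:ℝ)+(j:ℝ))^θ1*Real.exp (-β*((m:ℝ)+(j:ℝ))) := h1
          _ = C2*((m:ℝ)+(j:ℝ))^θ1*(Real.exp (-β*(m:ℝ))*Real.exp (-β*(j:ℝ))) := by rw [hb2]
          _ ≤ C2*((2:ℝ)^θ1*(m:ℝ)^θ1)*(Real.exp (-β*(m:ℝ))*Real.exp (-(β/8)*(m:ℝ)^η)) := by
              apply mul_le_mul
              · exact mul_le_mul_of_nonneg_left hb1 hC2.le
              · exact mul_le_mul_of_nonneg_left hb3 hb4
              · positivity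
              · positivity
          _ = (C2*(2:ℝ)^θ1*((m:ℝ)^(2*θ1)*Real.exp (-(β/8)*(m:ℝ)^η))) * ((m:ℝ)^(-θ1)*Real.exp (-β*(m:ℝ))) := by
              rw [hPsplit]; ring
          _ ≤ (C1/2) * ((m:ℝ)^(-θ1)*Real.exp (-β*(m:ℝ))) := by
              apply mul_le_mul_of_nonneg_right hT1 (by positivity)
          _ = (C1*((m:ℝ)^(-θ1))*Real.exp (-β*(m:ℝ)))/2 := by ring
      have hhalf : c (m+j) ≤ c m / 2 := hcmj.trans (by linarith)
      have hminj := hmin (m+j) hmemj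
      simp only [hL] at hminj
      rw [hcast] at hminj
      have hexp1 : ((m:ℝ)+(j:ℝ))/((n:ℝ)-K n)*σ2
          = (m:ℝ)/((n:ℝ)-K n)*σ2 + (j:ℝ)/((n:ℝ)-K n)*σ2 := by ring
      rw [hexp1] at hminj
      have h1 : c m/2 ≤ (j:ℝ)/((n:ℝ)-K n)*σ2 := by linarith
      have h2 : c m/2 * ((n:ℝ)-K n) ≤ (j:ℝ)*σ2 := by
        have h3 : (j:ℝ)/((n:ℝ)-K n)*σ2 * ((n:ℝ)-K n) = (j:ℝ)*σ2 := by field_simp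
        calc c m/2*((n:ℝ)-K n) ≤ (j:ℝ)/((n:ℝ)-K n)*σ2*((n:ℝ)-K n) :=
              mul_le_mul_of_nonneg_right h1 hN0.le
        _ = (j:ℝ)*σ2 := h3
      have hckpos : 0 ≤ ((n:ℝ)-K n)*c k := mul_nonneg hN0.le (hnonneg k)
      have h2jx : 2*(j:ℝ)*σ2 ≤ σ2/2*((k:ℝ)-(m:ℝ)) := by
        nlinarith [hσ2, hfar, hjx4]
      rw [hkey]
      linarith [hckpos, h2, h2jx]
  constructor
  · intro η hη0 hη1
    exact ⟨σ2/2, by linarith, part1 η hη0 hη1⟩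
  · intro ξ hξ θ hθ0 hθ1'
    obtain ⟨n0, hn0⟩ := part1 (θ/2) (by linarith) (by linarith)
    have h2 := hkstarM 2
    rw [eventually_atTop] at h2
    obtain ⟨n1, hn1⟩ := h2
    refine ⟨σ2/2, by linarith, max n0 n1, ?_⟩
    intro n hn k hk hfar
    have hm2 : 2 ≤ kstar n := hn1 n (le_trans (le_max_right _ _) hn)
    have hm1R : (1:ℝ) < (kstar n:ℝ) := by exact_mod_cast (by omega : 1 < kstar n)
    have hlt : (kstar n:ℝ)^(θ/2) < (kstar n:ℝ)^θ :=
      Real.rpow_lt_rpow_of_exponent_lt hm1R (by linarith)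
    have hX := hn0 n (le_trans (le_max_left _ _) hn) k hk (lt_of_lt_of_le hlt hfar)
    have hone : (1:ℝ) ≤ (kstar n:ℝ)^ξ := Real.one_le_rpow (by linarith) hξ.le
    have hXn : 0 ≤ ((n : ℝ) - (K n : ℝ)) * (L n k - L n (kstar n)) / |(k : ℝ) - (kstar n : ℝ)| :=
      le_trans (by linarith) hX
    calc σ2/2 ≤ _ := hX
    _ ≤ (kstar n:ℝ)^ξ * _ := le_mul_of_one_le_left hXn hone
end

section
/- Let σ² > 0, C_4 > 0, M_1 > 0, ξ_1 ≥ 2, and δ_1 > 0 with β > 1 + δ_1, and let c : ℕ → ℝ be a nonincreasing nonnegative sequence satisfying (C_4 − M_1 k^{−ξ_1}) k^{−β} ≤ c_k ≤ (C_4 + M_1 k^{−ξ_1}) k^{−β} for all k ≥ 1 (the algebraic-decay condition (3.5) with c_k playing the role of ‖a − a(k)‖_R²). Let K_n satisfy C_l ≤ K_n^{2+δ_1}/n ≤ C_u for some positive C_l, C_u, set N = n − K_n, L_n(k) = (k/N)σ² + c_k for 1 ≤ k ≤ K_n, and let k_n* minimize L_n over {1,…,K_n}. Then k_n* = (σ²/(N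 C_4 β))^{−1/(β+1)} + O(1); that is, there exists C > 0 such that |k_n* − (σ²/(N C_4 β))^{−1/(β+1)}| ≤ C for all sufficiently large n. -/
/-!
Write `σ²/N = C₄ β m^{-(β+1)}`, so that `m` is the claimed location of `k_n*`. With `t = m y`,
the proxy `C₄ β m^{-(β+1)} t + C₄ t^{-β}` equals `C₄ m^{-β} (y^{-β} + β y)`, and Bernoulli's
inequality gives `y^{-β} + β y ≥ β + 1 + β (y - 1)² / y` as well as `≤ β + 1 + β² s²` at
`y = 1 + s`. As `c_k = C₄ k^{-β} + O(k^{-β-2})`, this yields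
`L(⌈m⌉) ≤ C₄ (β + 1) m^{-β} + O(m^{-β-2})`, while every `k ≥ m/4` with `|k - m| > D` pays a
quadratic penalty `C₄ β D² m^{-β-2} / 2` that beats the error terms once `D` is a large constant.
For `k ≤ m/4` that error bound is too weak, but monotonicity gives
`c_k ≥ c_{⌊m/4⌋} ≥ (3/4) 4^β C₄ m^{-β}`, which is already too large.
Condition (K.4) makes `K_n ≍ n^{1/(2+δ₁)}`, so `N ≍ n`, `m → ∞` and
`m ≍ n^{1/(β+1)} = o(K_n)`, so that `⌈m⌉` is an admissible order.
-/

open Filter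

theorem add_one_add_mul_sq_div_le_rpow_neg_add_mul {p y : ℝ} (hp : 1 ≤ p) (hy : 0 < y) :
    p + 1 + p * ((y - 1) ^ 2 / y) ≤ y ^ (-p) + p * y := by
  have hbernoulli : 1 + p * (y⁻¹ - 1) ≤ y ^ (-p) := by
    rw [Real.rpow_neg hy.le, ← Real.inv_rpow hy.le]
    simpa using one_add_mul_self_le_rpow_one_add (s := y⁻¹ - 1) (by linarith [inv_pos.2 hy]) hp
  have hsq : (y - 1) ^ 2 / y = y⁻¹ - 1 + (y - 1) := by field_simp; ring
  rw [hsq]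
  linarith

theorem rpow_neg_add_mul_le_add_one_add_sq {p s : ℝ} (hp : 1 ≤ p) (hs : 0 ≤ s) :
    (1 + s) ^ (-p) + p * (1 + s) ≤ p + 1 + p ^ 2 * s ^ 2 := by
  have hps : 0 < 1 + p * s := by positivity
  have hinv : (1 + s) ^ (-p) ≤ (1 + p * s)⁻¹ := by
    rw [Real.rpow_neg (by linarith)]
    exact inv_anti₀ hps (one_add_mul_self_le_rpow_one_add (by linarith) hp)
  -- `(1 - x + x²)(1 + x) = 1 + x³`
  have hquad : (1 + p * s)⁻¹ ≤ 1 - p * s + p ^ 2 * s ^ 2 := by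
    rw [inv_le_iff_one_le_mul₀ hps]
    nlinarith [pow_nonneg (mul_nonneg (by linarith : (0:ℝ) ≤ p) hs) 3]
  nlinarith

theorem half_sq_le_sq_sub_one_div {y d : ℝ} (hy : 0 < y) (hd : 0 ≤ d) (hd1 : d ≤ 1)
    (hdy : d ≤ |y - 1|) : d ^ 2 / 2 ≤ (y - 1) ^ 2 / y := by
  rw [div_le_div_iff₀ two_pos hy]
  have hsq : d ^ 2 ≤ (y - 1) ^ 2 := by rw [← sq_abs (y - 1)]; gcongr
  have hd2 : d ^ 2 ≤ 1 := by nlinarith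
  rcases le_or_gt y 2 with h | h
  · nlinarith
  · nlinarith [mul_le_mul_of_nonneg_right hd2 hy.le]

theorem mul_rpow_neg_add_one_mul_add_rpow_neg {m t : ℝ} (β : ℝ) (hm : 0 < m) (ht : 0 < t) :
    β * m ^ (-(β + 1)) * t + t ^ (-β) = m ^ (-β) * ((t / m) ^ (-β) + β * (t / m)) := by
  have hmβ : m ^ (-β) ≠ 0 := (Real.rpow_pos_of_pos hm _).ne'
  rw [Real.div_rpow ht.le hm.le, show -(β + 1) = -β + -1 by ring, Real.rpow_add hm,
    Real.rpow_neg_one]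
  field_simp
  ring

theorem rpow_neg_add_two {m : ℝ} (β : ℝ) (hm : 0 < m) : m ^ (-(β + 2)) = m ^ (-β) / m ^ 2 := by
  rw [show -(β + 2) = -β + -2 by ring, Real.rpow_add hm, Real.rpow_neg hm.le 2, Real.rpow_two,
    div_eq_mul_inv]

theorem div_rpow_neg {m a : ℝ} (x : ℝ) (hm : 0 ≤ m) (ha : 0 ≤ a) :
    (m / a) ^ (-x) = a ^ x * m ^ (-x) := by
  rw [Real.div_rpow hm ha, Real.rpow_neg ha, div_inv_eq_mul, mul_comm]

theorem eventually_mul_rpow_add_one_le_mul_rpow {a b A B : ℝ} (ha : 0 ≤ a) (hab : a < b)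
    (hB : 0 < B) : ∀ᶠ x : ℝ in atTop, A * x ^ a + 1 ≤ B * x ^ b := by
  filter_upwards [eventually_ge_atTop 1,
    (tendsto_rpow_atTop (sub_pos.2 hab)).eventually_ge_atTop ((A + 1) / B)] with x hx hxba
  have hxa : 1 ≤ x ^ a := Real.one_le_rpow hx ha
  have hsplit : x ^ b = x ^ (b - a) * x ^ a := by
    rw [← Real.rpow_add (by linarith), sub_add_cancel]
  rw [div_le_iff₀ hB] at hxba
  rw [hsplit]
  nlinarith [mul_le_mul_of_nonneg_right hxba (by linarith : (0:ℝ) ≤ x ^ a)]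

theorem abs_sub_mul_rpow_neg_le_of_decay {C4 M1 ξ β x y : ℝ} (hM1 : 0 ≤ M1) (hξ : 2 ≤ ξ)
    (hx : 1 ≤ x)
    (h : (C4 - M1 * x ^ (-ξ)) * x ^ (-β) ≤ y ∧ y ≤ (C4 + M1 * x ^ (-ξ)) * x ^ (-β)) :
    |y - C4 * x ^ (-β)| ≤ M1 * x ^ (-(β + 2)) := by
  have hx0 : 0 < x := by linarith
  have herr : M1 * x ^ (-ξ) * x ^ (-β) ≤ M1 * x ^ (-(β + 2)) := by
    rw [show -(β + 2) = -2 + -β by ring, Real.rpow_add hx0, ← mul_assoc]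
    gcongr
  rw [abs_sub_le_iff]
  constructor <;> linarith [h.1, h.2]

/-- `L_n(k) = (k/N) σ² + c_k` with the slope `σ²/N` written as `C₄ β m^{-(β+1)}`, so that `t = m`
minimizes the continuous proxy `C₄ β m^{-(β+1)} t + C₄ t^{-β}`. -/
noncomputable def approxMSPE (C4 β m : ℝ) (c : ℕ → ℝ) (k : ℕ) : ℝ :=
  C4 * β * m ^ (-(β + 1)) * k + c k

section Minimizer

variable {C4 M1 β : ℝ} {c : ℕ → ℝ}

theorem approxMSPE_ceil_le (hC4 : 0 ≤ C4) (hM1 : 0 ≤ M1) (hβ : 1 ≤ β)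
    (hc : ∀ k : ℕ, 1 ≤ k → |c k - C4 * (k : ℝ) ^ (-β)| ≤ M1 * (k : ℝ) ^ (-(β + 2)))
    {m : ℝ} (hm : 0 < m) :
    approxMSPE C4 β m c ⌈m⌉₊ ≤ C4 * (β + 1) * m ^ (-β) + (C4 * β ^ 2 + M1) * m ^ (-(β + 2)) := by
  set k := ⌈m⌉₊
  have hmk : m ≤ k := Nat.le_ceil m
  have hkm : (k : ℝ) < m + 1 := Nat.ceil_lt_add_one hm.le
  have hk : 0 < (k : ℝ) := hm.trans_le hmk
  set s := (k : ℝ) / m - 1 with hs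
  have hs0 : 0 ≤ s := by rw [hs, sub_nonneg, le_div_iff₀ hm]; linarith
  have hsm : s * m < 1 := by rw [hs, sub_mul, div_mul_cancel₀ _ hm.ne']; linarith
  have hproxy : β * m ^ (-(β + 1)) * k + (k : ℝ) ^ (-β) ≤ m ^ (-β) * (β + 1 + β ^ 2 * s ^ 2) := by
    rw [mul_rpow_neg_add_one_mul_add_rpow_neg β hm hk, show (k : ℝ) / m = 1 + s by ring]
    exact mul_le_mul_of_nonneg_left (rpow_neg_add_mul_le_add_one_add_sq hβ hs0) (by positivity)
  have hs2 : m ^ (-β) * s ^ 2 ≤ m ^ (-(β + 2)) := by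
    rw [rpow_neg_add_two β hm, le_div_iff₀ (by positivity)]
    have : (s * m) ^ 2 ≤ 1 := by nlinarith [mul_nonneg hs0 hm.le]
    calc m ^ (-β) * s ^ 2 * m ^ 2 = m ^ (-β) * (s * m) ^ 2 := by ring
      _ ≤ m ^ (-β) := mul_le_of_le_one_right (by positivity) this
  have herr : M1 * (k : ℝ) ^ (-(β + 2)) ≤ M1 * m ^ (-(β + 2)) :=
    mul_le_mul_of_nonneg_left (Real.rpow_le_rpow_of_nonpos hm hmk (by linarith)) hM1
  have hck := (abs_sub_le_iff.1 (hc k (Nat.one_le_ceil_iff.2 hm))).1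
  have := mul_le_mul_of_nonneg_left hproxy hC4
  have := mul_le_mul_of_nonneg_left hs2 (by positivity : 0 ≤ C4 * β ^ 2)
  unfold approxMSPE
  linarith

theorem three_quarters_mul_rpow_neg_le (hmono : Antitone c)
    (hc : ∀ k : ℕ, 1 ≤ k → |c k - C4 * (k : ℝ) ^ (-β)| ≤ M1 * (k : ℝ) ^ (-(β + 2)))
    {j k : ℕ} (hkj : k ≤ j) (hj : 1 ≤ j) (hjM : 4 * M1 ≤ C4 * j ^ 2) :
    3 / 4 * C4 * (j : ℝ) ^ (-β) ≤ c k := by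
  have hj0 : (0 : ℝ) < j := by exact_mod_cast hj
  have hcj := (abs_sub_le_iff.1 (hc j hj)).2
  have herr : M1 * (j : ℝ) ^ (-(β + 2)) ≤ C4 / 4 * (j : ℝ) ^ (-β) := by
    rw [rpow_neg_add_two β hj0, mul_div_assoc', div_le_iff₀ (by positivity)]
    have := Real.rpow_pos_of_pos hj0 (-β)
    nlinarith
  linarith [hmono hkj]

theorem approxMSPE_ceil_lt_of_le_div_four (hC4 : 0 < C4) (hM1 : 0 ≤ M1) (hβ : 1 ≤ β)
    (hmono : Antitone c)
    (hc : ∀ k : ℕ, 1 ≤ k → |c k - C4 * (k : ℝ) ^ (-β)| ≤ M1 * (k : ℝ) ^ (-(β + 2)))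
    {m : ℝ} (hm : 4 * M1 / C4 + 2 ≤ m / 4) (hmβ : C4 * β ^ 2 + M1 < C4 * m ^ 2)
    {k : ℕ} (hk : (k : ℝ) ≤ m / 4) :
    approxMSPE C4 β m c ⌈m⌉₊ < approxMSPE C4 β m c k := by
  have hM1C4 : 0 ≤ 4 * M1 / C4 := by positivity
  have hm0 : 0 < m := by linarith
  set j := ⌊m / 4⌋₊
  have hj : m / 4 - 1 < j := Nat.sub_one_lt_floor _
  have hj1 : 1 ≤ j := Nat.le_floor (by push_cast; linarith)
  have hjM : 4 * M1 ≤ C4 * j ^ 2 := by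
    have h1 : 4 * M1 / C4 ≤ j := by linarith
    rw [div_le_iff₀ hC4] at h1
    have : (j : ℝ) ≤ (j : ℝ) ^ 2 := by nlinarith [(Nat.one_le_cast (α := ℝ)).2 hj1]
    nlinarith
  have hck := three_quarters_mul_rpow_neg_le hmono hc (Nat.le_floor hk) hj1 hjM
  have hjβ : (m / 4) ^ (-β) ≤ (j : ℝ) ^ (-β) :=
    Real.rpow_le_rpow_of_nonpos (by exact_mod_cast hj1) (Nat.floor_le (by positivity)) (by linarith)
  have hfour : 1 + β * 3 ≤ (4 : ℝ) ^ β := by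
    have := one_add_mul_self_le_rpow_one_add (s := 3) (by norm_num) hβ
    norm_num at this ⊢; linarith
  have hmβpos := Real.rpow_pos_of_pos hm0 (-β)
  have hsmall : (C4 * β ^ 2 + M1) * m ^ (-(β + 2)) < C4 * m ^ (-β) := by
    rw [rpow_neg_add_two β hm0, mul_div_assoc', div_lt_iff₀ (by positivity)]
    nlinarith
  rw [div_rpow_neg β hm0.le (by norm_num)] at hjβ
  have hlin : 0 ≤ C4 * β * m ^ (-(β + 1)) * k := by positivity
  calc approxMSPE C4 β m c ⌈m⌉₊
      ≤ C4 * (β + 1) * m ^ (-β) + (C4 * β ^ 2 + M1) * m ^ (-(β + 2)) :=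
        approxMSPE_ceil_le hC4.le hM1 hβ hc hm0
    _ < 3 / 4 * C4 * ((1 + β * 3) * m ^ (-β)) := by
        nlinarith [mul_nonneg (mul_nonneg hC4.le hmβpos.le) (sub_nonneg.2 hβ)]
    _ ≤ 3 / 4 * C4 * (j : ℝ) ^ (-β) := by
      gcongr
      exact (mul_le_mul_of_nonneg_right hfour hmβpos.le).trans hjβ
    _ ≤ approxMSPE C4 β m c k := by unfold approxMSPE; linarith

theorem approxMSPE_ceil_lt_of_div_four_lt (hC4 : 0 < C4) (hM1 : 0 ≤ M1) (hβ : 1 ≤ β)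
    (hc : ∀ k : ℕ, 1 ≤ k → |c k - C4 * (k : ℝ) ^ (-β)| ≤ M1 * (k : ℝ) ^ (-(β + 2)))
    {m D : ℝ} (hD : 0 < D) (hDm : D ≤ m)
    (hDsq : C4 * β ^ 2 + M1 * (1 + 4 ^ (β + 2)) < C4 * β / 2 * D ^ 2)
    {k : ℕ} (hk : m / 4 < k) (hkD : D < |(k : ℝ) - m|) :
    approxMSPE C4 β m c ⌈m⌉₊ < approxMSPE C4 β m c k := by
  have hm : 0 < m := hD.trans_le hDm
  have hk0 : (0 : ℝ) < k := by linarith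
  have hy : 0 < (k : ℝ) / m := div_pos hk0 hm
  have hmβ := Real.rpow_pos_of_pos hm (-β)
  have hgap : (D / m) ^ 2 / 2 ≤ ((k : ℝ) / m - 1) ^ 2 / ((k : ℝ) / m) := by
    refine half_sq_le_sq_sub_one_div hy (by positivity) (div_le_one_of_le₀ hDm hm.le) ?_
    rw [div_sub_one hm.ne', abs_div, abs_of_pos hm]
    exact div_le_div_of_nonneg_right hkD.le hm.le
  have hproxy : m ^ (-β) * (β + 1) + β / 2 * D ^ 2 * m ^ (-(β + 2)) ≤
      β * m ^ (-(β + 1)) * k + (k : ℝ) ^ (-β) := by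
    rw [mul_rpow_neg_add_one_mul_add_rpow_neg β hm hk0, rpow_neg_add_two β hm]
    calc m ^ (-β) * (β + 1) + β / 2 * D ^ 2 * (m ^ (-β) / m ^ 2)
        = m ^ (-β) * (β + 1 + β * ((D / m) ^ 2 / 2)) := by field_simp
      _ ≤ m ^ (-β) * (β + 1 + β * (((k : ℝ) / m - 1) ^ 2 / ((k : ℝ) / m))) := by gcongr
      _ ≤ _ := mul_le_mul_of_nonneg_left
          (by linarith [add_one_add_mul_sq_div_le_rpow_neg_add_mul hβ hy]) hmβ.le
  have herr : M1 * (k : ℝ) ^ (-(β + 2)) ≤ M1 * 4 ^ (β + 2) * m ^ (-(β + 2)) := by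
    rw [mul_assoc, ← div_rpow_neg (β + 2) hm.le (by norm_num : (0 : ℝ) ≤ 4)]
    exact mul_le_mul_of_nonneg_left
      (Real.rpow_le_rpow_of_nonpos (by positivity) hk.le (by linarith)) hM1
  have hck := (abs_sub_le_iff.1 (hc k (Nat.cast_pos.1 hk0))).2
  have hstrict := mul_lt_mul_of_pos_right hDsq (Real.rpow_pos_of_pos hm (-(β + 2)))
  have := mul_le_mul_of_nonneg_left hproxy hC4.le
  have hceil := approxMSPE_ceil_le hC4.le hM1 hβ hc hm
  unfold approxMSPE at hceil ⊢
  linarith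

theorem exists_pos_eventually_abs_sub_le_of_minimizes (hC4 : 0 < C4) (hM1 : 0 ≤ M1) (hβ : 1 ≤ β)
    (hmono : Antitone c)
    (hc : ∀ k : ℕ, 1 ≤ k → |c k - C4 * (k : ℝ) ^ (-β)| ≤ M1 * (k : ℝ) ^ (-(β + 2))) :
    ∃ D > 0, ∀ᶠ m : ℝ in atTop, ∀ K k : ℕ, m + 1 ≤ K → k ∈ Finset.Icc 1 K →
      (∀ j ∈ Finset.Icc 1 K, approxMSPE C4 β m c k ≤ approxMSPE C4 β m c j) →
      |(k : ℝ) - m| ≤ D := by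
  set D := 2 * (C4 * β ^ 2 + M1 * (1 + 4 ^ (β + 2))) / (C4 * β) + 1
  have hD1 : 1 ≤ D := le_add_of_nonneg_left (by positivity)
  have hDsq : C4 * β ^ 2 + M1 * (1 + 4 ^ (β + 2)) < C4 * β / 2 * D ^ 2 := by
    have hCβ : 0 < C4 * β / 2 := by positivity
    have : C4 * β ^ 2 + M1 * (1 + 4 ^ (β + 2)) = C4 * β / 2 * (D - 1) := by
      simp only [D]; field_simp; ring
    rw [this]
    exact mul_lt_mul_of_pos_left (by nlinarith) hCβ
  refine ⟨D, by positivity, ?_⟩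
  filter_upwards [eventually_ge_atTop D, eventually_ge_atTop (4 * (4 * M1 / C4 + 2)),
    eventually_ge_atTop (β ^ 2 + M1 / C4 + 1)] with m hDm hm4 hmβ K k hK hk hmin
  have hm : 0 < m := by linarith
  have hmβ' : C4 * β ^ 2 + M1 < C4 * m ^ 2 := by
    have : β ^ 2 + M1 / C4 < m ^ 2 := by nlinarith
    have hM1C4 : C4 * (M1 / C4) = M1 := mul_div_cancel₀ _ hC4.ne'
    nlinarith
  have hceil : ⌈m⌉₊ ∈ Finset.Icc 1 K :=
    Finset.mem_Icc.2 ⟨Nat.one_le_ceil_iff.2 hm, Nat.ceil_le.2 (by linarith)⟩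
  by_contra! hfar
  refine (hmin _ hceil).not_gt ?_
  rcases le_or_gt (k : ℝ) (m / 4) with hsmall | hlarge
  · exact approxMSPE_ceil_lt_of_le_div_four hC4 hM1 hβ hmono hc (by linarith) hmβ' hsmall
  · exact approxMSPE_ceil_lt_of_div_four_lt hC4 hM1 hβ hc (by linarith) hDm hDsq hlarge hfar

end Minimizer

theorem eventually_le_half_of_rpow_div_le {K : ℕ → ℕ} {q Cu : ℝ} (hq : 1 < q) (hCu : 0 < Cu)
    (hK : ∀ n : ℕ, 1 ≤ n → (K n : ℝ) ^ q / n ≤ Cu) : ∀ᶠ n : ℕ in atTop, (K n : ℝ) ≤ n / 2 := by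
  filter_upwards [eventually_ge_atTop 1, tendsto_natCast_atTop_atTop.eventually
    (eventually_mul_rpow_add_one_le_mul_rpow (A := Cu ^ q⁻¹) (inv_nonneg.2 (by linarith))
      (inv_lt_one_of_one_lt₀ hq) (by norm_num : (0 : ℝ) < 1 / 2))] with n hn hlt
  have hn0 : (0 : ℝ) < n := by exact_mod_cast hn
  have hKn : (K n : ℝ) ≤ (Cu * n) ^ q⁻¹ := by
    rw [Real.le_rpow_inv_iff_of_pos (by positivity) (by positivity) (by linarith),
      ← div_le_iff₀ hn0]
    exact hK n hn
  rw [Real.mul_rpow hCu.le hn0.le] at hKn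
  rw [Real.rpow_one] at hlt
  linarith

theorem eventually_mul_rpow_add_one_le_of_le_rpow_div {K : ℕ → ℕ} {q Cl A a : ℝ} (hq : 0 < q)
    (hCl : 0 < Cl) (hK : ∀ n : ℕ, 1 ≤ n → Cl ≤ (K n : ℝ) ^ q / n) (ha : 0 ≤ a) (haq : a < q⁻¹) :
    ∀ᶠ n : ℕ in atTop, A * (n : ℝ) ^ a + 1 ≤ K n := by
  filter_upwards [eventually_ge_atTop 1, tendsto_natCast_atTop_atTop.eventually
    (eventually_mul_rpow_add_one_le_mul_rpow (A := A) ha haq (Real.rpow_pos_of_pos hCl q⁻¹))]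
    with n hn hlt
  have hn0 : (0 : ℝ) < n := by exact_mod_cast hn
  have hKn : (Cl * n) ^ q⁻¹ ≤ K n := by
    rw [Real.rpow_inv_le_iff_of_pos (by positivity) (by positivity) hq, ← le_div_iff₀ hn0]
    exact hK n hn
  rw [Real.mul_rpow hCl.le hn0.le] at hKn
  linarith

theorem rpow_neg_one_div_div_eq {σ2 N C4 β : ℝ} (hσ2 : 0 < σ2) (hN : 0 < N) (hC4 : 0 < C4)
    (hβ : 0 < β) :
    (σ2 / (N * C4 * β)) ^ (-(1 / (β + 1))) = (N * (C4 * β / σ2)) ^ (1 / (β + 1)) := by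
  rw [Real.rpow_neg (by positivity), ← Real.inv_rpow (by positivity)]
  congr 1
  field_simp

theorem mul_rpow_neg_add_one_rpow_neg_one_div {σ2 N C4 β : ℝ} (hσ2 : 0 ≤ σ2) (hN : 0 ≤ N)
    (hC4 : 0 < C4) (hβ : 0 < β) :
    C4 * β * ((σ2 / (N * C4 * β)) ^ (-(1 / (β + 1)))) ^ (-(β + 1)) = σ2 / N := by
  rw [← Real.rpow_mul (by positivity), neg_mul_neg, one_div_mul_cancel (by linarith),
    Real.rpow_one]
  field_simp

theorem stmt_16_general
    (σ2 C4 M1 ξ1 δ1 β : ℝ) (hσ2 : 0 < σ2) (hC4 : 0 < C4) (hM1 : 0 < M1)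
    (hξ1 : 2 ≤ ξ1) (hδ1 : 0 < δ1) (hβ : 1 + δ1 < β)
    (c : ℕ → ℝ) (hmono : Antitone c)
    (hdecay : ∀ k : ℕ, 1 ≤ k →
      (C4 - M1 * (k : ℝ) ^ (-ξ1)) * (k : ℝ) ^ (-β) ≤ c k ∧
      c k ≤ (C4 + M1 * (k : ℝ) ^ (-ξ1)) * (k : ℝ) ^ (-β))
    (K : ℕ → ℕ) (Cl Cu : ℝ) (hCl : 0 < Cl) (hCu : 0 < Cu)
    (hK4 : ∀ n : ℕ, 1 ≤ n →
      Cl ≤ (K n : ℝ) ^ ((2 : ℝ) + δ1) / (n : ℝ) ∧ (K n : ℝ) ^ ((2 : ℝ) + δ1) / (n : ℝ) ≤ Cu)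
    (L : ℕ → ℕ → ℝ)
    (hL : ∀ n k, L n k = (k : ℝ) / ((n : ℝ) - (K n : ℝ)) * σ2 + c k)
    (kstar : ℕ → ℕ)
    (hkstar : ∀ n, kstar n ∈ Finset.Icc 1 (K n) ∧
      ∀ k ∈ Finset.Icc 1 (K n), L n (kstar n) ≤ L n k) :
    ∃ C : ℝ, 0 < C ∧ ∃ n0 : ℕ, ∀ n ≥ n0,
      |(kstar n : ℝ) - (σ2 / (((n : ℝ) - (K n : ℝ)) * C4 * β)) ^ (-(1 / (β + 1)))| ≤ C := by
  have hβ0 : 0 < β := by linarith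
  set m : ℕ → ℝ := fun n => (σ2 / (((n : ℝ) - (K n : ℝ)) * C4 * β)) ^ (-(1 / (β + 1)))
  obtain ⟨D, hD, hmin⟩ := exists_pos_eventually_abs_sub_le_of_minimizes hC4 hM1.le (by linarith)
    hmono fun k hk =>
      abs_sub_mul_rpow_neg_le_of_decay hM1.le hξ1 (Nat.one_le_cast.2 hk) (hdecay k hk)
  have hKhalf : ∀ᶠ n : ℕ in atTop, (K n : ℝ) ≤ n / 2 :=
    eventually_le_half_of_rpow_div_le (by linarith) hCu fun n hn => (hK4 n hn).2
  have hKm : ∀ᶠ n : ℕ in atTop, (C4 * β / σ2) ^ (1 / (β + 1)) * (n : ℝ) ^ (1 / (β + 1)) + 1 ≤ K n :=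
    eventually_mul_rpow_add_one_le_of_le_rpow_div (by linarith) hCl (fun n hn => (hK4 n hn).1)
      (by positivity) (by rw [one_div]; exact inv_strictAnti₀ (by linarith) (by linarith))
  have hN : Tendsto (fun n : ℕ => (n : ℝ) - K n) atTop atTop :=
    tendsto_atTop_mono' _ (hKhalf.mono fun n hn => by linarith)
      (tendsto_natCast_atTop_atTop.atTop_div_const two_pos)
  have hm : Tendsto m atTop atTop :=
    ((tendsto_rpow_atTop (by positivity)).comp (hN.atTop_mul_const (by positivity))).congr'
      ((hN.eventually_gt_atTop 0).mono fun n hn =>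
        (rpow_neg_one_div_div_eq hσ2 hn hC4 hβ0).symm)
  obtain ⟨n0, hn0⟩ :=
    eventually_atTop.1 (((hm.eventually hmin).and (hN.eventually_gt_atTop 0)).and hKm)
  refine ⟨D, hD, n0, fun n hn => ?_⟩
  obtain ⟨⟨hmin_n, hNn⟩, hKmn⟩ := hn0 n hn
  have hmn : m n ≤ (C4 * β / σ2) ^ (1 / (β + 1)) * (n : ℝ) ^ (1 / (β + 1)) := by
    rw [← Real.mul_rpow (by positivity) (by positivity), mul_comm,
      show m n = _ from rpow_neg_one_div_div_eq hσ2 hNn hC4 hβ0]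
    gcongr
    linarith [(K n).cast_nonneg (α := ℝ)]
  have hL' : ∀ k, L n k = approxMSPE C4 β (m n) c k := fun k => by
    rw [hL, approxMSPE, mul_rpow_neg_add_one_rpow_neg_one_div hσ2.le hNn.le hC4 hβ0]
    ring
  exact hmin_n (K n) (kstar n) (by linarith) (hkstar n).1 (by simpa only [hL'] using (hkstar n).2)

/-- algebraic-decay case — location of the minimizer `k_n*` of
`L_n(k) = (k/N)σ² + c_k`, where `c_k` satisfies the algebraic-decay condition (3.5)
with `ξ1 ≥ 2` and `β > 1 + δ1`, and `K_n` satisfies (K.4):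
`k_n* = (σ²/(N C₄ β))^{-1/(β+1)} + O(1)`. -/
theorem stmt_16
    (σ2 C4 M1 ξ1 δ1 β : ℝ) (hσ2 : 0 < σ2) (hC4 : 0 < C4) (hM1 : 0 < M1)
    (hξ1 : 2 ≤ ξ1) (hδ1 : 0 < δ1) (hβ : 1 + δ1 < β)
    (c : ℕ → ℝ) (hmono : Antitone c) (hnonneg : ∀ k, 0 ≤ c k)
    (hdecay : ∀ k : ℕ, 1 ≤ k →
      (C4 - M1 * (k : ℝ) ^ (-ξ1)) * (k : ℝ) ^ (-β) ≤ c k ∧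
      c k ≤ (C4 + M1 * (k : ℝ) ^ (-ξ1)) * (k : ℝ) ^ (-β))
    (K : ℕ → ℕ) (Cl Cu : ℝ) (hCl : 0 < Cl) (hCu : 0 < Cu)
    (hK4 : ∀ n : ℕ, 1 ≤ n →
      Cl ≤ (K n : ℝ) ^ ((2 : ℝ) + δ1) / (n : ℝ) ∧ (K n : ℝ) ^ ((2 : ℝ) + δ1) / (n : ℝ) ≤ Cu)
    (L : ℕ → ℕ → ℝ)
    (hL : ∀ n k, L n k = (k : ℝ) / ((n : ℝ) - (K n : ℝ)) * σ2 + c k)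
    (kstar : ℕ → ℕ)
    (hkstar : ∀ n, kstar n ∈ Finset.Icc 1 (K n) ∧
      ∀ k ∈ Finset.Icc 1 (K n), L n (kstar n) ≤ L n k) :
    ∃ C : ℝ, 0 < C ∧ ∃ n0 : ℕ, ∀ n ≥ n0,
      |(kstar n : ℝ) - (σ2 / (((n : ℝ) - (K n : ℝ)) * C4 * β)) ^ (-(1 / (β + 1)))| ≤ C :=
  stmt_16_general σ2 C4 M1 ξ1 δ1 β hσ2 hC4 hM1 hξ1 hδ1 hβ c hmono hdecay K Cl Cu hCl hCu hK4 L hL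
    kstar hkstar
end
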